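/- arXiv:math/0205314 — 4 statements merged into one kernel-verified Lean document; each statement's English description precedes it below -/
import Mathlib

section
/- Let g ≥ 2, let G be a finite group, and suppose the Riemann–Hurwitz relation 2(g−1)/|G| = 2(g₀−1) + Σᵢ(1 − 1/cᵢ) holds, where g₀ ≥ 0 is an integer and c₁,…,c_r are integers ≥ 2. If |G| > 4(g−1), then g₀ = 0 and r ∈ {3, 4}. -/
theorem large_group_forces_genus_zero_and_three_or_four_branch_points
    (G : Type*) [Group G] [Finite G]
    (g g₀ r : ℕ) (hg : 2 ≤ g) (c : Fin r → ℕ) (hc : ∀ i, 2 ≤ c i)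
    (hRH : (2 * ((g : ℚ) - 1)) / (Nat.card G : ℚ) =
      2 * ((g₀ : ℚ) - 1) + ∑ i, (1 - 1 / (c i : ℚ)))
    (hlarge : (Nat.card G : ℚ) > 4 * ((g : ℚ) - 1)) :
    g₀ = 0 ∧ (r = 3 ∨ r = 4) := by
  have hGpos : (0:ℚ) < (Nat.card G : ℚ) := by
    exact_mod_cast Nat.card_pos (α := G)
  have hgQ : (2:ℚ) ≤ (g:ℚ) := by exact_mod_cast hg
  set S : ℚ := ∑ i, (1 - 1 / (c i : ℚ)) with hS
  set Q : ℚ := (2 * ((g : ℚ) - 1)) / (Nat.card G : ℚ) with hQ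
  have hQpos : 0 < Q := by
    apply div_pos _ hGpos; linarith
  have hQlt : Q < 1/2 := by
    rw [hQ, div_lt_iff₀ hGpos]
    nlinarith
  have hSlo : (r:ℚ)/2 ≤ S := by
    have : ∑ _i : Fin r, (1/2 : ℚ) ≤ S := by
      apply Finset.sum_le_sum
      intro i _
      have hci : (2:ℚ) ≤ (c i : ℚ) := by exact_mod_cast hc i
      have : 1 / (c i : ℚ) ≤ 1/2 := by
        apply one_div_le_one_div_of_le <;> linarith
      linarith
    simpa [Finset.sum_const, div_eq_mul_inv, mul_comm] using this
  have hShi : S ≤ (r:ℚ) := by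
    have : S ≤ ∑ _i : Fin r, (1:ℚ) := by
      apply Finset.sum_le_sum
      intro i _
      have hci : (0:ℚ) < (c i : ℚ) := by
        have := hc i; positivity
      have : 0 < 1 / (c i : ℚ) := by positivity
      linarith
    simpa using this
  have hEq : Q = 2 * ((g₀ : ℚ) - 1) + S := hRH
  have hg₀ : g₀ = 0 := by
    by_contra h
    have h1 : 1 ≤ g₀ := Nat.one_le_iff_ne_zero.mpr h
    have h1Q : (1:ℚ) ≤ (g₀:ℚ) := by exact_mod_cast h1
    have hSpos : 0 ≤ S := by
      have : (0:ℚ) ≤ (r:ℚ)/2 := by positivity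
      linarith
    -- then S < 1/2, so r/2 < 1/2, so r = 0, so S = 0, so Q = 2(g₀-1) ∈ (0,1/2): impossible
    have hr0 : (r:ℚ) < 1 := by linarith
    have : r = 0 := by exact_mod_cast Nat.lt_one_iff.mp (by exact_mod_cast hr0)
    subst this
    simp only [hS, Finset.univ_eq_empty, Finset.sum_empty] at hEq
    have : (0:ℚ) < 2 * ((g₀:ℚ) - 1) ∧ 2 * ((g₀:ℚ) - 1) < 1/2 := ⟨by linarith, by linarith⟩
    obtain ⟨hA, hB⟩ := this
    have : (g₀:ℚ) < 2 := by linarith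
    have h2 : g₀ < 2 := by exact_mod_cast this
    interval_cases g₀ <;> simp_all <;> linarith
  subst hg₀
  refine ⟨rfl, ?_⟩
  simp only [Nat.cast_zero] at hEq
  have hS2 : 2 < S := by linarith
  have hS52 : S < 5/2 := by linarith
  have hr3 : (2:ℚ) < (r:ℚ) := lt_of_lt_of_le hS2 hShi
  have hr5 : (r:ℚ) < 5 := by linarith
  have h3 : 2 < r := by exact_mod_cast hr3
  have h5 : r < 5 := by exact_mod_cast hr5
  omega
end

section
/- If 2(g−1)/N = 2(g₀−1) + Σᵢ₌₁^r (1 − 1/cᵢ) with g ≥ 2, N a positive integer, g₀ ≥ 0 an integer, r ≥ 0, and each cᵢ an integer ≥ 2, then the right-hand side is at least 1/42; consequently N ≤ 84(g−1) (the Hurwitz bound). -/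
lemma key3 (a b c : ℕ) (ha : 2 ≤ a) (hab : a ≤ b) (hbc : b ≤ c)
    (h : 1/(a:ℚ) + 1/(b:ℚ) + 1/(c:ℚ) < 1) :
    1/(a:ℚ) + 1/(b:ℚ) + 1/(c:ℚ) ≤ 41/42 := by
  by_contra hcon
  push_neg at hcon
  have ha0 : (0:ℚ) < a := by exact_mod_cast (by omega : 0 < a)
  have hb0 : (0:ℚ) < b := by exact_mod_cast (by omega : 0 < b)
  have hc0 : (0:ℚ) < c := by exact_mod_cast (by omega : 0 < c)
  have hba : 1/(b:ℚ) ≤ 1/(a:ℚ) := one_div_le_one_div_of_le ha0 (by exact_mod_cast hab)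
  have hcb : 1/(c:ℚ) ≤ 1/(b:ℚ) := one_div_le_one_div_of_le hb0 (by exact_mod_cast hbc)
  have h1a : (1/(a:ℚ)) * a = 1 := by field_simp
  have h1b : (1/(b:ℚ)) * b = 1 := by field_simp
  have h1c : (1/(c:ℚ)) * c = 1 := by field_simp
  have haq : a < 4 := by
    have : (a:ℚ) < 4 := by nlinarith
    exact_mod_cast this
  interval_cases a
  · -- a = 2
    have hbq : b < 5 := by
      have : (b:ℚ) < 5 := by push_cast at h hcon h1b ⊢; nlinarith
      exact_mod_cast this
    interval_cases b
    · push_cast at h hcon h1c ⊢; nlinarith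
    · -- b = 3 : 1/7 < 1/c < 1/6
      have hcq : c < 7 := by
        have : (c:ℚ) < 7 := by push_cast at h hcon h1c ⊢; nlinarith
        exact_mod_cast this
      have hcq' : (c:ℚ) ≤ 6 := by exact_mod_cast (by omega : c ≤ 6)
      push_cast at h hcon h1c
      nlinarith
    · -- b = 4 : c = 4 forced then sum = 1
      have hcq : c < 5 := by
        have : (c:ℚ) < 5 := by push_cast at h hcon h1c ⊢; nlinarith
        exact_mod_cast this
      have : c = 4 := by omega
      subst this
      push_cast at h hcon; nlinarith
  · -- a = 3
    have hbq : b < 4 := by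
      have : (b:ℚ) < 4 := by push_cast at h hcon h1b ⊢; nlinarith
      exact_mod_cast this
    have : b = 3 := by omega
    subst this
    have hcq : c < 4 := by
      have : (c:ℚ) < 4 := by push_cast at h hcon h1c ⊢; nlinarith
      exact_mod_cast this
    have : c = 3 := by omega
    subst this
    push_cast at h; nlinarith

lemma key3' (a b c : ℕ) (ha : 2 ≤ a) (hb : 2 ≤ b) (hc : 2 ≤ c)
    (h : 1/(a:ℚ) + 1/(b:ℚ) + 1/(c:ℚ) < 1) :
    1/(a:ℚ) + 1/(b:ℚ) + 1/(c:ℚ) ≤ 41/42 := by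
  rcases le_total a b with h1 | h1 <;> rcases le_total b c with h2 | h2 <;>
    rcases le_total a c with h3 | h3
  · linarith [key3 a b c ha h1 h2 h]
  · linarith [key3 a b c ha h1 h2 h]
  · linarith [key3 a c b ha h3 h2 (by linarith)]
  · linarith [key3 c a b hc h3 h1 (by linarith)]
  · linarith [key3 b a c hb h1 h3 (by linarith)]
  · linarith [key3 b c a hb h2 h3 (by linarith)]
  · linarith [key3 c b a hc h2 h1 (by linarith)]
  · linarith [key3 c b a hc h2 h1 (by linarith)]

theorem hurwitz_bound
    (g g₀ N r : ℕ) (hg : 2 ≤ g) (hN : 0 < N) (c : Fin r → ℕ) (hc : ∀ i, 2 ≤ c i)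
    (hRH : (2 * ((g : ℚ) - 1)) / (N : ℚ) =
      2 * ((g₀ : ℚ) - 1) + ∑ i, (1 - 1 / (c i : ℚ))) :
    (1 : ℚ) / 42 ≤ 2 * ((g₀ : ℚ) - 1) + ∑ i, (1 - 1 / (c i : ℚ)) ∧
    (N : ℚ) ≤ 84 * ((g : ℚ) - 1) := by
  set Q := 2 * ((g₀ : ℚ) - 1) + ∑ i, (1 - 1 / (c i : ℚ)) with hQ
  have hN0 : (0:ℚ) < N := by exact_mod_cast hN
  have hg2 : (2:ℚ) ≤ g := by exact_mod_cast hg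
  have hQpos : 0 < Q := by
    rw [← hRH]
    apply div_pos (by linarith) hN0
  -- per-term bounds
  have hterm_lb : ∀ i, (1:ℚ)/2 ≤ 1 - 1/(c i : ℚ) := by
    intro i
    have h2 : (2:ℚ) ≤ (c i : ℚ) := by exact_mod_cast hc i
    have := one_div_le_one_div_of_le (by norm_num : (0:ℚ) < 2) h2
    linarith
  have hterm_ub : ∀ i, 1 - 1/(c i : ℚ) ≤ 1 := by
    intro i
    have h0 : (0:ℚ) < (c i : ℚ) := by
      exact_mod_cast (by have := hc i; omega : 0 < c i)
    have : (0:ℚ) ≤ 1/(c i : ℚ) := by positivity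
    linarith
  have hS_lb : (r:ℚ)/2 ≤ ∑ i, (1 - 1/(c i : ℚ)) := by
    calc (r:ℚ)/2 = (Finset.univ : Finset (Fin r)).card • ((1:ℚ)/2) := by
          simp [Finset.card_univ]; ring
      _ ≤ ∑ i, (1 - 1/(c i : ℚ)) :=
          Finset.card_nsmul_le_sum _ _ _ (fun i _ => hterm_lb i)
  have hS_ub : ∑ i, (1 - 1/(c i : ℚ)) ≤ (r:ℚ) := by
    calc ∑ i, (1 - 1/(c i : ℚ)) ≤ (Finset.univ : Finset (Fin r)).card • (1:ℚ) :=
          Finset.sum_le_card_nsmul _ _ _ (fun i _ => hterm_ub i)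
      _ = (r:ℚ) := by simp [Finset.card_univ]
  have key : (1:ℚ)/42 ≤ Q := by
    match g₀, r with
    | g₀ + 1, 0 =>
        -- Q = 2*g₀ > 0 forces g₀ ≥ 1
        simp only [Finset.univ_eq_empty, Finset.sum_empty] at hQ
        rcases Nat.eq_zero_or_pos g₀ with h | h
        · subst h; simp at hQ; rw [hQ] at hQpos; norm_num at hQpos
        · have : (1:ℚ) ≤ g₀ := by exact_mod_cast h
          rw [hQ]; push_cast; linarith
    | g₀ + 1, r + 1 =>
        have : (0:ℚ) ≤ (g₀:ℚ) := by positivity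
        have hr : (1:ℚ) ≤ ((r:ℕ) + 1 : ℚ) := by push_cast; linarith [Nat.cast_nonneg (α := ℚ) r]
        rw [hQ]; push_cast
        push_cast at hS_lb
        linarith
    | 0, r =>
        -- Q = S - 2 > 0 so r ≥ 3
        have hQeq : Q = ∑ i, (1 - 1/(c i : ℚ)) - 2 := by rw [hQ]; push_cast; ring
        have hr3 : 3 ≤ r := by
          by_contra h
          have : (r:ℚ) ≤ 2 := by exact_mod_cast (by omega : r ≤ 2)
          linarith [hQeq ▸ hQpos]
        match r, c, hc, hterm_lb, hterm_ub, hS_lb, hS_ub, hQeq, hQpos with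
        | 3, c, hc, hterm_lb, _, _, _, hQeq, hQpos =>
          rw [hQeq, Fin.sum_univ_three] at hQpos ⊢
          have := key3' (c 0) (c 1) (c 2) (hc 0) (hc 1) (hc 2) (by linarith)
          linarith
        | 4, c, hc, hterm_lb, _, hS_lb, _, hQeq, hQpos =>
          by_cases hall : ∀ i, c i = 2
          · have : ∑ i, (1 - 1/(c i : ℚ)) = 2 := by
              rw [Fin.sum_univ_four]; simp [hall 0, hall 1, hall 2, hall 3]; norm_num
            rw [hQeq, this] at hQpos; norm_num at hQpos
          · push_neg at hall
            obtain ⟨j, hj⟩ := hall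
            have hj3 : 3 ≤ c j := by have := hc j; omega
            have hj3' : (2:ℚ)/3 ≤ 1 - 1/(c j : ℚ) := by
              have h3 : (3:ℚ) ≤ (c j : ℚ) := by exact_mod_cast hj3
              have := one_div_le_one_div_of_le (by norm_num : (0:ℚ) < 3) h3
              linarith
            -- S - 4/2 ≥ (t j - 1/2)
            have hsum : ∑ i, ((1 - 1/(c i : ℚ)) - 1/2) ≥ (1 - 1/(c j : ℚ)) - 1/2 := by
              apply Finset.single_le_sum (f := fun i => (1 - 1/(c i : ℚ)) - 1/2)
                (fun i _ => by linarith [hterm_lb i]) (Finset.mem_univ j)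
            have hsum' : ∑ i, ((1 - 1/(c i : ℚ)) - 1/2)
                = (∑ i, (1 - 1/(c i : ℚ))) - 2 := by
              rw [Finset.sum_sub_distrib]; simp; norm_num
            rw [hQeq]; linarith [hsum' ▸ hsum]
        | (n + 5), c, hc, _, _, hS_lb, _, hQeq, hQpos =>
          have : (5:ℚ) ≤ ((n:ℕ) + 5 : ℚ) := by push_cast; linarith [Nat.cast_nonneg (α := ℚ) n]
          rw [hQeq]
          push_cast at hS_lb ⊢
          linarith
  refine ⟨key, ?_⟩
  have h2 : (1:ℚ)/42 ≤ 2 * ((g:ℚ) - 1) / N := hRH ▸ key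
  rw [div_le_div_iff₀ (by norm_num) hN0] at h2
  linarith
end

section
/- Let Γ be the group with presentation on generators σ₁,…,σ₆ and relations σ₁² = ⋯ = σ₆² = 1 = σ₁σ₂σ₃σ₄σ₅σ₆, and let Π be the kernel of the homomorphism Γ → {±1} sending each σᵢ to −1. Then Π is generated by α₁ = σ₂σ₁, β₁ = σ₂σ₃, α₂ = σ₅σ₄, β₂ = σ₅σ₆, and these satisfy [α₁,β₁][α₂,β₂] = 1, where [α,β] = α⁻¹β⁻¹αβ. -/
def rels6 : Set (FreeGroup (Fin 6)) :=
  (Set.range fun i : Fin 6 => FreeGroup.of i * FreeGroup.of i) ∪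
  {FreeGroup.of 0 * FreeGroup.of 1 * FreeGroup.of 2 * FreeGroup.of 3 *
    FreeGroup.of 4 * FreeGroup.of 5}

abbrev G6' := PresentedGroup rels6

abbrev a6 (i : Fin 6) : G6' := PresentedGroup.of i

lemma rel_one6 {r : FreeGroup (Fin 6)} (hr : r ∈ rels6) :
    (PresentedGroup.mk rels6 r : G6') = 1 :=
  (QuotientGroup.eq_one_iff r).2 (Subgroup.subset_normalClosure hr)

lemma sq6 (i : Fin 6) : a6 i * a6 i = 1 := by
  have := rel_one6 (Or.inl ⟨i, rfl⟩)
  simpa [a6, PresentedGroup.of] using this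

lemma long6 : a6 0 * a6 1 * a6 2 * a6 3 * a6 4 * a6 5 = 1 := by
  have := rel_one6 (Or.inr rfl)
  simpa [a6, PresentedGroup.of] using this

lemma inv_a6 (i : Fin 6) : (a6 i)⁻¹ = a6 i :=
  inv_eq_of_mul_eq_one_right (sq6 i)

lemma sq6' (i : Fin 6) (x : G6') : a6 i * (a6 i * x) = x := by
  rw [← mul_assoc, sq6, one_mul]

lemma h012 (x : G6') : a6 0 * (a6 1 * (a6 2 * x)) = a6 5 * (a6 4 * (a6 3 * x)) := by
  have h : a6 0 * a6 1 * a6 2 = a6 5 * a6 4 * a6 3 := by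
    have h2 : a6 0 * a6 1 * a6 2 * (a6 3 * a6 4 * a6 5) = 1 := by
      rw [← long6]; group
    rw [mul_eq_one_iff_eq_inv.mp h2]
    simp [mul_inv_rev, inv_a6, mul_assoc]
  calc a6 0 * (a6 1 * (a6 2 * x)) = (a6 0 * a6 1 * a6 2) * x := by group
  _ = (a6 5 * a6 4 * a6 3) * x := by rw [h]
  _ = a6 5 * (a6 4 * (a6 3 * x)) := by group

lemma e3eq : a6 3 = a6 2 * (a6 1 * (a6 0 * (a6 5 * a6 4))) := by
  have h := h012 (a6 3)
  rw [sq6, mul_one] at h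
  calc a6 3 = a6 2 * (a6 1 * (a6 0 * (a6 0 * (a6 1 * (a6 2 * a6 3))))) := by
        simp [sq6']
  _ = a6 2 * (a6 1 * (a6 0 * (a6 5 * a6 4))) := by rw [h]

theorem genus_two_kernel_generators
    (f : PresentedGroup rels6 →* ℤˣ)
    (hf : ∀ i : Fin 6, f (PresentedGroup.of i) = -1) :
    Subgroup.closure
      ({PresentedGroup.of 1 * PresentedGroup.of 0,
        PresentedGroup.of 1 * PresentedGroup.of 2,
        PresentedGroup.of 4 * PresentedGroup.of 3,
        PresentedGroup.of 4 * PresentedGroup.of 5} : Set (PresentedGroup rels6)) = f.ker ∧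
    ((PresentedGroup.of 1 * PresentedGroup.of 0)⁻¹ *
     (PresentedGroup.of 1 * PresentedGroup.of 2)⁻¹ *
     (PresentedGroup.of 1 * PresentedGroup.of 0) *
     (PresentedGroup.of 1 * PresentedGroup.of 2)) *
    ((PresentedGroup.of 4 * PresentedGroup.of 3)⁻¹ *
     (PresentedGroup.of 4 * PresentedGroup.of 5)⁻¹ *
     (PresentedGroup.of 4 * PresentedGroup.of 3) *
     (PresentedGroup.of 4 * PresentedGroup.of 5)) = (1 : PresentedGroup rels6) := by
  set S : Set G6' := {a6 1 * a6 0, a6 1 * a6 2, a6 4 * a6 3, a6 4 * a6 5} with hS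
  set H : Subgroup G6' := Subgroup.closure S with hH
  have hg1 : a6 1 * a6 0 ∈ H := Subgroup.subset_closure (by simp [hS])
  have hg2 : a6 1 * a6 2 ∈ H := Subgroup.subset_closure (by simp [hS])
  have hg3 : a6 4 * a6 3 ∈ H := Subgroup.subset_closure (by simp [hS])
  have hg4 : a6 4 * a6 5 ∈ H := Subgroup.subset_closure (by simp [hS])
  have he01 : a6 0 * a6 1 ∈ H := by
    have : (a6 1 * a6 0)⁻¹ ∈ H := inv_mem hg1
    simpa [mul_inv_rev, inv_a6] using this
  have he02 : a6 0 * a6 2 ∈ H := by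
    have : (a6 0 * a6 1) * (a6 1 * a6 2) ∈ H := mul_mem he01 hg2
    simpa [mul_assoc, sq6'] using this
  have he03 : a6 0 * a6 3 ∈ H := by
    have h : (a6 0 * a6 2) * ((a6 1 * a6 0) * (a6 4 * a6 5)⁻¹) ∈ H :=
      mul_mem he02 (mul_mem hg1 (inv_mem hg4))
    have e : (a6 0 * a6 2) * ((a6 1 * a6 0) * (a6 4 * a6 5)⁻¹) = a6 0 * a6 3 := by
      rw [mul_inv_rev, inv_a6, inv_a6]
      conv_rhs => rw [e3eq]
      simp [mul_assoc]
    rwa [e] at h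
  have he04 : a6 0 * a6 4 ∈ H := by
    have h : (a6 0 * a6 3) * (a6 4 * a6 3)⁻¹ ∈ H := mul_mem he03 (inv_mem hg3)
    have e : (a6 0 * a6 3) * (a6 4 * a6 3)⁻¹ = a6 0 * a6 4 := by
      rw [mul_inv_rev, inv_a6, inv_a6]; simp [mul_assoc, sq6']
    rwa [e] at h
  have he05 : a6 0 * a6 5 ∈ H := by
    have h : (a6 0 * a6 4) * (a6 4 * a6 5) ∈ H := mul_mem he04 hg4
    have e : (a6 0 * a6 4) * (a6 4 * a6 5) = a6 0 * a6 5 := by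
      simp [mul_assoc, sq6']
    rwa [e] at h
  -- conjugation by a6 0 preserves H
  have hconj : ∀ h ∈ H, a6 0 * h * a6 0 ∈ H := by
    intro h hh
    rw [hH] at hh
    refine Subgroup.closure_induction ?_ ?_ ?_ ?_ hh
    · intro x hx
      rcases hx with hx | hx | hx | hx
      · rw [hx]
        have e : a6 0 * (a6 1 * a6 0) * a6 0 = a6 0 * a6 1 := by
          simp [mul_assoc, sq6]
        rw [e]; exact he01
      · rw [hx]
        have h' : (a6 0 * a6 1) * (a6 0 * a6 2)⁻¹ ∈ H := mul_mem he01 (inv_mem he02)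
        have e : (a6 0 * a6 1) * (a6 0 * a6 2)⁻¹ = a6 0 * (a6 1 * a6 2) * a6 0 := by
          rw [mul_inv_rev, inv_a6, inv_a6]; simp [mul_assoc]
        rwa [e] at h'
      · rw [hx]
        have h' : (a6 0 * a6 4) * (a6 0 * a6 3)⁻¹ ∈ H := mul_mem he04 (inv_mem he03)
        have e : (a6 0 * a6 4) * (a6 0 * a6 3)⁻¹ = a6 0 * (a6 4 * a6 3) * a6 0 := by
          rw [mul_inv_rev, inv_a6, inv_a6]; simp [mul_assoc]
        rwa [e] at h'
      · rw [hx]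
        have h' : (a6 0 * a6 4) * (a6 0 * a6 5)⁻¹ ∈ H := mul_mem he04 (inv_mem he05)
        have e : (a6 0 * a6 4) * (a6 0 * a6 5)⁻¹ = a6 0 * (a6 4 * a6 5) * a6 0 := by
          rw [mul_inv_rev, inv_a6, inv_a6]; simp [mul_assoc]
        rwa [e] at h'
    · rw [mul_one, sq6]; exact one_mem H
    · intro x y _ _ px py
      have h' : (a6 0 * x * a6 0) * (a6 0 * y * a6 0) ∈ H := mul_mem px py
      have e : (a6 0 * x * a6 0) * (a6 0 * y * a6 0) = a6 0 * (x * y) * a6 0 := by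
        simp [mul_assoc, sq6']
      rwa [e] at h'
    · intro x _ px
      have h' : (a6 0 * x * a6 0)⁻¹ ∈ H := inv_mem px
      have e : (a6 0 * x * a6 0)⁻¹ = a6 0 * x⁻¹ * a6 0 := by
        rw [mul_inv_rev, mul_inv_rev, inv_a6, mul_assoc]
      rwa [e] at h'
  -- H ≤ ker f
  have hHker : H ≤ f.ker := by
    rw [hH]
    refine (Subgroup.closure_le _).2 ?_
    intro x hx
    rcases hx with hx | hx | hx | hx <;>
      · rw [SetLike.mem_coe, MonoidHom.mem_ker, hx, map_mul, hf, hf]; decide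
  -- every element is in H or a6 0 * · ∈ H
  have hcover : ∀ g : G6', g ∈ H ∨ a6 0 * g ∈ H := by
    intro g
    have hg : g ∈ Subgroup.closure (Set.range (PresentedGroup.of : Fin 6 → G6')) := by
      rw [PresentedGroup.closure_range_of]; trivial
    refine Subgroup.closure_induction (p := fun g _ => g ∈ H ∨ a6 0 * g ∈ H) ?_ ?_ ?_ ?_ hg
    · rintro x ⟨i, rfl⟩
      right
      fin_cases i
      · show a6 0 * a6 0 ∈ H
        rw [sq6]; exact one_mem H
      · exact he01
      · exact he02
      · exact he03
      · exact he04
      · exact he05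
    · left; exact one_mem H
    · rintro x y _ _ (px | px) (py | py)
      · left; exact mul_mem px py
      · right
        have h' : (a6 0 * x * a6 0) * (a6 0 * y) ∈ H := mul_mem (hconj x px) py
        have e : (a6 0 * x * a6 0) * (a6 0 * y) = a6 0 * (x * y) := by
          simp [mul_assoc, sq6']
        rwa [e] at h'
      · right
        have h' : (a6 0 * x) * y ∈ H := mul_mem px py
        rwa [mul_assoc] at h'
      · left
        have h1 : a6 0 * (a6 0 * x) * a6 0 ∈ H := hconj _ px
        have e1 : a6 0 * (a6 0 * x) * a6 0 = x * a6 0 := by rw [sq6']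
        rw [e1] at h1
        have h2 : (x * a6 0) * (a6 0 * y) ∈ H := mul_mem h1 py
        have e2 : (x * a6 0) * (a6 0 * y) = x * y := by simp [mul_assoc, sq6']
        rwa [e2] at h2
    · rintro x _ (px | px)
      · left; exact inv_mem px
      · right
        have h' : a6 0 * (a6 0 * x)⁻¹ * a6 0 ∈ H := hconj _ (inv_mem px)
        have e : a6 0 * (a6 0 * x)⁻¹ * a6 0 = a6 0 * x⁻¹ := by
          rw [mul_inv_rev, inv_a6]
          simp [mul_assoc, sq6, sq6']
        rwa [e] at h'
  constructor
  · apply le_antisymm hHker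
    intro g hg
    rcases hcover g with h | h
    · exact h
    · exfalso
      have h1 : f (a6 0 * g) = 1 := hHker h
      rw [MonoidHom.mem_ker] at hg
      rw [map_mul, hf, hg, mul_one] at h1
      exact absurd h1 (by decide)
  · show (a6 1 * a6 0)⁻¹ * (a6 1 * a6 2)⁻¹ * (a6 1 * a6 0) * (a6 1 * a6 2) *
      ((a6 4 * a6 3)⁻¹ * (a6 4 * a6 5)⁻¹ * (a6 4 * a6 3) * (a6 4 * a6 5)) = 1
    simp only [mul_inv_rev, inv_a6]
    simp only [mul_assoc, sq6', h012, sq6]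
end

section
/- The group PSL(3,2) (equivalently PSL(2,7)), of order 168, is generated by an element of order 2 and an element of order 3 whose product has order 7. -/
/-!
`PSL(3,2)` is `SL(3,𝔽₂)` itself, because the centre of `SL(3,𝔽₂)` consists of the scalar
matrices whose cube is `1`, and `1` is the only unit of `𝔽₂`; for the same reason
`SL(3,𝔽₂) = GL(3,𝔽₂)`, of order `(8 - 1)(8 - 2)(8 - 4) = 168`.

The orders of the explicit generators `a`, `b`, `a * b` are checked by computation. They generate
because `SL(n,𝔽₂)` is generated by the elementary transvections (over `𝔽₂` there are no
nontrivial diagonal matrices left to account for), and every elementary transvection of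
`SL(3,𝔽₂)` is obtained from `a` by conjugations and one commutator.
-/

/-- PSL(3,2): the quotient of SL(3, F₂) by its center. -/
abbrev PSL32 :=
  Matrix.SpecialLinearGroup (Fin 3) (ZMod 2) ⧸
    Subgroup.center (Matrix.SpecialLinearGroup (Fin 3) (ZMod 2))

/-- `G` is `(l, m, n)`-generated: a quotient of the triangle group `Δ(l, m, n)` in which the
canonical generators keep their orders. The `(2, 3, 7)`-generated groups are the Hurwitz groups. -/
def IsTriangleGenerated (G : Type*) [Group G] (l m n : ℕ) : Prop :=
  ∃ a b : G, orderOf a = l ∧ orderOf b = m ∧ orderOf (a * b) = n ∧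
    Subgroup.closure ({a, b} : Set G) = ⊤

theorem IsTriangleGenerated.of_mulEquiv {G H : Type*} [Group G] [Group H] (e : G ≃* H)
    {l m n : ℕ} (hG : IsTriangleGenerated G l m n) : IsTriangleGenerated H l m n := by
  obtain ⟨a, b, ha, hb, hab, hgen⟩ := hG
  refine ⟨e a, e b, by rwa [MulEquiv.orderOf_eq], by rwa [MulEquiv.orderOf_eq],
    by rwa [← map_mul, MulEquiv.orderOf_eq], ?_⟩
  have := congrArg (Subgroup.map e.toMonoidHom) hgen
  rwa [MonoidHom.map_closure, Subgroup.map_top_of_surjective _ e.surjective,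
    MulEquiv.coe_toMonoidHom, Set.image_pair] at this

namespace Matrix.SpecialLinearGroup

variable {ι R : Type*} [Fintype ι] [DecidableEq ι]

theorem center_eq_bot_of_subsingleton_units [CommRing R] [Subsingleton Rˣ] :
    Subgroup.center (SpecialLinearGroup ι R) = ⊥ := by
  have : Subsingleton (Subgroup.center (SpecialLinearGroup ι R)) :=
    center_equiv_rootsOfUnity.toEquiv.subsingleton
  exact Subgroup.eq_bot_of_subsingleton _

noncomputable def toGLEquivOfSubsingletonUnits [CommRing R] [Subsingleton Rˣ] :
    SpecialLinearGroup ι R ≃* GL ι R :=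
  MulEquiv.ofBijective toGL ⟨toGL_injective, fun g => by
    rw [← Set.mem_range, range_toGL, Set.mem_preimage, Set.mem_singleton_iff]
    exact Subsingleton.elim _ _⟩

theorem eq_top_of_forall_transvection_one_mem [Nontrivial ι] [Field R] [Subsingleton Rˣ]
    (H : Subgroup (SpecialLinearGroup ι R))
    (hH : ∀ (i j : ι) (hij : i ≠ j), transvection hij (1 : R) ∈ H) : H = ⊤ := by
  have eq_one (c : R) (hc : c ≠ 0) : c = 1 :=
    congrArg Units.val (Subsingleton.elim (Units.mk0 c hc) 1)
  refine eq_top_iff.2 fun M _ =>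
    diagonal_transvection_induction' (· ∈ H) M ?_ ?_ fun _ _ => H.mul_mem
  · intro i j hij c hc
    obtain rfl := eq_one c hc
    convert H.one_mem
    ext
    simp [diag2n_coe]
  · intro i j hij c
    by_cases hc : c = 0
    · simp [hc, H.one_mem]
    · exact eq_one c hc ▸ hH i j hij

end Matrix.SpecialLinearGroup

namespace SL3F2

open Matrix MatrixGroups Matrix.SpecialLinearGroup
open scoped commutatorElement

def a : SL(3, ZMod 2) := ⟨!![0,0,1; 0,1,0; 1,0,0], by decide⟩

def b : SL(3, ZMod 2) := ⟨!![0,1,1; 1,0,1; 0,1,0], by decide⟩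

theorem card_eq : Nat.card SL(3, ZMod 2) = 168 := by
  rw [Nat.card_congr toGLEquivOfSubsingletonUnits.toEquiv, card_GL_field]
  decide

theorem orderOf_a : orderOf a = 2 :=
  orderOf_eq_prime (by decide) (by decide)

theorem orderOf_b : orderOf b = 3 :=
  orderOf_eq_prime (by decide) (by decide)

theorem orderOf_a_mul_b : orderOf (a * b) = 7 :=
  have : Fact (Nat.Prime 7) := ⟨by norm_num⟩
  orderOf_eq_prime (by decide) (by decide)

theorem closure_a_b : Subgroup.closure ({a, b} : Set SL(3, ZMod 2)) = ⊤ := by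
  set H := Subgroup.closure ({a, b} : Set SL(3, ZMod 2))
  have ha : a ∈ H := Subgroup.subset_closure (Set.mem_insert _ _)
  have hb : b ∈ H := Subgroup.subset_closure (Set.mem_insert_of_mem _ rfl)
  -- `b * a * b⁻¹` and `b⁻¹ * a * b` are the elementary transvections `E₀₁` and `E₁₂`, their
  -- commutator is `E₀₂`, and conjugation by `a` swaps the indices `0` and `2`.
  have transvection_mem_words (i j : Fin 3) (hij : i ≠ j) : transvection hij (1 : ZMod 2) ∈
      ({b * a * b⁻¹, b⁻¹ * a * b, ⁅b * a * b⁻¹, b⁻¹ * a * b⁆, a * (b * a * b⁻¹) * a,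
        a * (b⁻¹ * a * b) * a, a * ⁅b * a * b⁻¹, b⁻¹ * a * b⁆ * a} : Finset _) := by
    revert i j hij
    decide +kernel
  have hu : b * a * b⁻¹ ∈ H := H.mul_mem (H.mul_mem hb ha) (H.inv_mem hb)
  have hv : b⁻¹ * a * b ∈ H := H.mul_mem (H.mul_mem (H.inv_mem hb) ha) hb
  have huv : ⁅b * a * b⁻¹, b⁻¹ * a * b⁆ ∈ H :=
    H.mul_mem (H.mul_mem (H.mul_mem hu hv) (H.inv_mem hu)) (H.inv_mem hv)
  have conj_a (g : SL(3, ZMod 2)) (hg : g ∈ H) : a * g * a ∈ H := H.mul_mem (H.mul_mem ha hg) ha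
  refine eq_top_of_forall_transvection_one_mem H fun i j hij => ?_
  have := transvection_mem_words i j hij
  simp only [Finset.mem_insert, Finset.mem_singleton] at this
  rcases this with h | h | h | h | h | h <;> rw [h]
  exacts [hu, hv, huv, conj_a _ hu, conj_a _ hv, conj_a _ huv]

theorem isTriangleGenerated : IsTriangleGenerated SL(3, ZMod 2) 2 3 7 :=
  ⟨a, b, orderOf_a, orderOf_b, orderOf_a_mul_b, closure_a_b⟩

end SL3F2

theorem psl32_is_hurwitz_generated :
    Nat.card PSL32 = 168 ∧
    ∃ a b : PSL32, orderOf a = 2 ∧ orderOf b = 3 ∧ orderOf (a * b) = 7 ∧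
      Subgroup.closure ({a, b} : Set PSL32) = ⊤ := by
  have e : PSL32 ≃* Matrix.SpecialLinearGroup (Fin 3) (ZMod 2) :=
    (QuotientGroup.quotientMulEquivOfEq
      Matrix.SpecialLinearGroup.center_eq_bot_of_subsingleton_units).trans
      QuotientGroup.quotientBot
  exact ⟨(Nat.card_congr e.toEquiv).trans SL3F2.card_eq,
    SL3F2.isTriangleGenerated.of_mulEquiv e.symm⟩
end
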